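/- Let n ≥ 1 be an integer and m₁, m₂ coprime positive integers with m₁ ≠ m₂; set d := (m₁−m₂)/(m₁+m₂), M := (n+1)(m₁+m₂), F_n := (y + d x^{n+1}, (n+1)x^{2n+1} + (n+1)d x^n y), and I_M := (y − x^{n+1})^{m₁}(y + x^{n+1})^{m₂}. Let k ≥ n be an integer and let p ∈ ℝ[x,y] be quasi-homogeneous of type t = (1,n+1) and degree k. Then there exists a quasi-homogeneous polynomial q of type t and degree k + M − n with ∇q·F_n = p·I_M if and only if there exists a quasi-homogeneous polynomial q̃ of type t and degree k − n with ∇q̃·F_n = p. -/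

import Mathlib

open MvPolynomial

/-- A polynomial in two variables is quasi-homogeneous of type `(t₁,t₂)` and
degree `k` if every monomial `x^a y^b` occurring in it satisfies `t₁a + t₂b = k`. -/
def IsQH (t₁ t₂ k : ℕ) (p : MvPolynomial (Fin 2) ℝ) : Prop :=
  ∀ m ∈ p.support, t₁ * m 0 + t₂ * m 1 = k

/-- `∇p · (P,Q)` for a planar polynomial vector field `(P,Q)`. -/
noncomputable def gradDot (p P Q : MvPolynomial (Fin 2) ℝ) : MvPolynomial (Fin 2) ℝ :=
  pderiv 0 p * P + pderiv 1 p * Q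

/-!
The curves `y = e x^{n+1}` (`e = ±1`) are invariant for `F_n`: the cofactor of
`y - e x^{n+1}` is `(n+1)(d-e) x^n`, and the exponents `m₁, m₂` are chosen so that the
cofactors of `I_M` cancel. Hence `∇(I_M q')·F_n = I_M ∇q'·F_n`, which gives one direction.
Conversely, let `∇q·F_n = p I_M`. Restricted to the branch `y = e x^{n+1}`, the field
`F_n` is `(e+d) x^n` times the Euler field of the grading, so for `h` quasi-homogeneous of
degree `D` the restriction of `∇h·F_n + c x^n h` is `((e+d)D + c) x^n h|`. As long as this
factor does not vanish, divisibility of the left-hand side by the branch forces divisibility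
of `h`; peeling off one factor at a time, and using that the degree of `q` is at least
`deg I_M`, the factor never vanishes, so `(y - x^{n+1})^{m₁}` and `(y + x^{n+1})^{m₂}` divide
`q`. The two branches are distinct primes, so `I_M` divides `q`.
-/

namespace MvPolynomial

variable {R σ M : Type*}

theorem X_sub_dvd_sub_bind₁_update [CommRing R] [DecidableEq σ] (i : σ)
    (u g : MvPolynomial σ R) : X i - u ∣ g - bind₁ (Function.update X i u) g := by
  set I := Ideal.span {X i - u}
  have hmk : (Ideal.Quotient.mkₐ R I).comp (bind₁ (Function.update X i u)) =
      Ideal.Quotient.mkₐ R I := by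
    ext j
    rcases eq_or_ne j i with rfl | hj
    · simpa using (Ideal.Quotient.eq.2 (Ideal.mem_span_singleton_self _)).symm
    · simp [hj]
  rw [← Ideal.mem_span_singleton, ← Ideal.Quotient.eq]
  exact (DFunLike.congr_fun hmk g).symm

theorem X_sub_dvd_iff_bind₁_update_eq_zero [CommRing R] [DecidableEq σ] {i : σ}
    {u : MvPolynomial σ R} (hu : bind₁ (Function.update X i u) u = u) (g : MvPolynomial σ R) :
    X i - u ∣ g ↔ bind₁ (Function.update X i u) g = 0 := by
  constructor
  · rintro ⟨t, rfl⟩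
    simp [hu]
  · intro hg
    simpa [hg] using X_sub_dvd_sub_bind₁_update i u g

theorem IsWeightedHomogeneous.weightedHomogeneousComponent_mul_add [CommSemiring R]
    [AddCancelCommMonoid M] [DecidableEq M] {w : σ → M} {f : MvPolynomial σ R} {a : M}
    (hf : f.IsWeightedHomogeneous w a) (h : MvPolynomial σ R) (b : M) :
    weightedHomogeneousComponent w (a + b) (f * h) = f * weightedHomogeneousComponent w b h := by
  let _ := weightedGradedAlgebra R w
  rw [← weightedDecomposition.decompose'_apply, ← weightedDecomposition.decompose'_apply]
  exact DirectSum.coe_decompose_mul_add_of_left_mem _ hf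

theorem IsWeightedHomogeneous.exists_add_of_mul [CommSemiring R] [NoZeroDivisors R]
    [AddCancelCommMonoid M] {w : σ → M} {f h : MvPolynomial σ R} {a D : M}
    (hf : f.IsWeightedHomogeneous w a) (hfh : (f * h).IsWeightedHomogeneous w D)
    (hfh0 : f * h ≠ 0) : ∃ b, a + b = D ∧ h.IsWeightedHomogeneous w b := by
  classical
  have hdeg : ∀ d, coeff d h ≠ 0 → a + Finsupp.weight w d = D := by
    intro d hd
    by_contra hne
    have hcomp : weightedHomogeneousComponent w (a + Finsupp.weight w d) (f * h) = 0 :=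
      hfh.weightedHomogeneousComponent_ne _ hne
    rw [hf.weightedHomogeneousComponent_mul_add] at hcomp
    have := congrArg (coeff d) ((mul_eq_zero.mp hcomp).resolve_left (left_ne_zero_of_mul hfh0))
    simp [coeff_weightedHomogeneousComponent, hd] at this
  obtain ⟨d₀, hd₀⟩ := ne_zero_iff.mp (right_ne_zero_of_mul hfh0)
  exact ⟨_, hdeg d₀ hd₀, fun d hd =>
    add_left_cancel ((hdeg d hd).trans (hdeg d₀ hd₀).symm)⟩

theorem IsWeightedHomogeneous.of_mul_left [CommSemiring R] [NoZeroDivisors R]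
    [AddCancelCommMonoid M] {w : σ → M} {f h : MvPolynomial σ R} {a b : M}
    (hf : f.IsWeightedHomogeneous w a) (hf0 : f ≠ 0)
    (hfh : (f * h).IsWeightedHomogeneous w (a + b)) : h.IsWeightedHomogeneous w b := by
  rcases eq_or_ne h 0 with rfl | h0
  · exact isWeightedHomogeneous_zero R w b
  obtain ⟨b', hb', hh⟩ := hf.exists_add_of_mul hfh (mul_ne_zero hf0 h0)
  rwa [add_left_cancel hb'] at hh

end MvPolynomial

theorem isQH_iff_isWeightedHomogeneous (t₁ t₂ k : ℕ) (p : MvPolynomial (Fin 2) ℝ) :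
    IsQH t₁ t₂ k p ↔ p.IsWeightedHomogeneous ![t₁, t₂] k := by
  simp only [IsQH, IsWeightedHomogeneous, mem_support_iff, Finsupp.weight_apply, smul_eq_mul]
  simp [Finsupp.sum_fintype, mul_comm]

theorem gradDot_mul (a b P Q : MvPolynomial (Fin 2) ℝ) :
    gradDot (a * b) P Q = a * gradDot b P Q + b * gradDot a P Q := by
  simp only [gradDot, pderiv_mul]
  ring

noncomputable def fieldP (n : ℕ) (d : ℝ) : MvPolynomial (Fin 2) ℝ :=
  X 1 + C d * X 0 ^ (n + 1)

noncomputable def fieldQ (n : ℕ) (d : ℝ) : MvPolynomial (Fin 2) ℝ :=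
  C ((n : ℝ) + 1) * X 0 ^ (2 * n + 1) + C (((n : ℝ) + 1) * d) * X 0 ^ n * X 1

noncomputable def shiftedDeriv (n : ℕ) (d c : ℝ) (h : MvPolynomial (Fin 2) ℝ) :
    MvPolynomial (Fin 2) ℝ :=
  gradDot h (fieldP n d) (fieldQ n d) + C c * X 0 ^ n * h

noncomputable def branch (n : ℕ) (e : ℝ) : MvPolynomial (Fin 2) ℝ :=
  X 1 - C e * X 0 ^ (n + 1)

noncomputable def restrictToBranch (n : ℕ) (e : ℝ) :
    MvPolynomial (Fin 2) ℝ →ₐ[ℝ] MvPolynomial (Fin 2) ℝ :=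
  bind₁ (Function.update X 1 (C e * X 0 ^ (n + 1)))

section

variable {n : ℕ} {d e : ℝ}

@[simp] theorem restrictToBranch_X_zero : restrictToBranch n e (X 0) = X 0 := by
  simp [restrictToBranch]

@[simp] theorem restrictToBranch_C (a : ℝ) : restrictToBranch n e (C a) = C a := by
  simp [restrictToBranch]

@[simp] theorem restrictToBranch_X_one : restrictToBranch n e (X 1) = C e * X 0 ^ (n + 1) := by
  simp [restrictToBranch]

theorem gradDot_branch (he : e * e = 1) :
    gradDot (branch n e) (fieldP n d) (fieldQ n d) =
      C (((n : ℝ) + 1) * (d - e)) * X 0 ^ n * branch n e := by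
  have he' : (C e * C e : MvPolynomial (Fin 2) ℝ) = 1 := by rw [← map_mul, he, map_one]
  simp only [gradDot, branch, fieldP, fieldQ, map_sub, pderiv_X_self, pderiv_C_mul,
    pderiv_pow, pderiv_X_of_ne (show (0 : Fin 2) ≠ 1 by decide),
    pderiv_X_of_ne (show (1 : Fin 2) ≠ 0 by decide), map_mul, map_add, map_natCast, map_one,
    Nat.cast_add, Nat.cast_one, add_tsub_cancel_right]
  linear_combination (-((n : MvPolynomial (Fin 2) ℝ) + 1) * X 0 ^ (2 * n + 1)) * he'

theorem branch_ne_zero : branch n e ≠ 0 := by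
  intro h
  simpa [branch] using congrArg (eval ![0, 1]) h

theorem isWeightedHomogeneous_branch : (branch n e).IsWeightedHomogeneous ![1, n + 1] (n + 1) := by
  refine (isWeightedHomogeneous_X ℝ _ 1).sub ?_
  simpa using ((isWeightedHomogeneous_X ℝ ![1, n + 1] 0).pow (n + 1)).C_mul e

theorem branch_dvd_iff (g : MvPolynomial (Fin 2) ℝ) :
    branch n e ∣ g ↔ restrictToBranch n e g = 0 :=
  X_sub_dvd_iff_bind₁_update_eq_zero (by simp) g

theorem prime_branch : Prime (branch n e) := by
  have hker : Ideal.span {branch n e} = RingHom.ker (restrictToBranch n e) := by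
    ext g
    rw [Ideal.mem_span_singleton, RingHom.mem_ker, branch_dvd_iff]
  rw [← Ideal.span_singleton_prime branch_ne_zero, hker]
  exact RingHom.ker_isPrime _

theorem not_branch_dvd_branch {e' : ℝ} (h : e ≠ e') : ¬ branch n e ∣ branch n e' := by
  rw [branch_dvd_iff]
  simp only [branch, map_sub, map_mul, map_pow, restrictToBranch_X_one, restrictToBranch_X_zero,
    restrictToBranch_C]
  rw [← sub_mul, ← map_sub]
  exact mul_ne_zero (by simpa [sub_eq_zero] using h) (pow_ne_zero _ (X_ne_zero 0))

theorem shiftedDeriv_mul {f : MvPolynomial (Fin 2) ℝ} {κ : ℝ}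
    (hf : gradDot f (fieldP n d) (fieldQ n d) = C κ * X 0 ^ n * f) (c : ℝ)
    (h : MvPolynomial (Fin 2) ℝ) :
    shiftedDeriv n d c (f * h) = f * shiftedDeriv n d (c + κ) h := by
  simp only [shiftedDeriv, gradDot_mul, hf, map_add]
  ring

theorem shiftedDeriv_pow_mul {f : MvPolynomial (Fin 2) ℝ} {κ : ℝ}
    (hf : gradDot f (fieldP n d) (fieldQ n d) = C κ * X 0 ^ n * f) (m : ℕ) (c : ℝ)
    (h : MvPolynomial (Fin 2) ℝ) :
    shiftedDeriv n d c (f ^ m * h) = f ^ m * shiftedDeriv n d (c + m * κ) h := by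
  induction m generalizing c h with
  | zero => simp
  | succ m ih =>
    rw [pow_succ, mul_assoc, ih, shiftedDeriv_mul hf, ← mul_assoc]
    push_cast
    ring_nf

theorem restrictToBranch_shiftedDeriv (he : e * e = 1) {h : MvPolynomial (Fin 2) ℝ} {D : ℕ}
    (hh : h.IsWeightedHomogeneous ![1, n + 1] D) (c : ℝ) :
    restrictToBranch n e (shiftedDeriv n d c h) =
      C ((e + d) * D + c) * X 0 ^ n * restrictToBranch n e h := by
  have he' : (C e * C e : MvPolynomial (Fin 2) ℝ) = 1 := by rw [← map_mul, he, map_one]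
  have euler := congrArg (restrictToBranch n e) hh.sum_weight_X_mul_pderiv
  simp only [Fin.sum_univ_two, nsmul_eq_mul, map_add, map_mul, map_natCast,
    restrictToBranch_X_zero, restrictToBranch_X_one, Matrix.cons_val_zero,
    Matrix.cons_val_one, Nat.cast_add, Nat.cast_one, map_one, one_mul] at euler
  simp only [shiftedDeriv, gradDot, fieldP, fieldQ, map_add, map_mul, map_pow, map_natCast,
    map_one, restrictToBranch_X_zero, restrictToBranch_X_one, restrictToBranch_C]
  linear_combination (C e + C d) * X 0 ^ n * euler
    - (n + 1) * X 0 ^ (2 * n + 1) * restrictToBranch n e (pderiv 1 h) * he'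

theorem branch_dvd_of_dvd_shiftedDeriv (he : e * e = 1) {c : ℝ} {D : ℕ}
    {h : MvPolynomial (Fin 2) ℝ} (hh : h.IsWeightedHomogeneous ![1, n + 1] D)
    (hdvd : branch n e ∣ shiftedDeriv n d c h) (hc : (e + d) * D + c ≠ 0) :
    branch n e ∣ h := by
  rw [branch_dvd_iff, restrictToBranch_shiftedDeriv he hh] at hdvd
  rw [branch_dvd_iff]
  exact (mul_eq_zero.mp hdvd).resolve_left
    (mul_ne_zero (mt C_eq_zero.mp hc) (pow_ne_zero _ (X_ne_zero 0)))

-- Splitting off one factor `branch n e` lowers `D` by `n + 1` and raises `c` by the cofactor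
-- `(n + 1)(d - e)`, so `(e + d) D + c` drops by `2e(n + 1)` at each step.
theorem branch_pow_dvd_of_dvd_shiftedDeriv (he : e * e = 1) (m : ℕ) {c : ℝ} {D : ℕ}
    {h : MvPolynomial (Fin 2) ℝ} (hh : h.IsWeightedHomogeneous ![1, n + 1] D)
    (hdvd : branch n e ^ m ∣ shiftedDeriv n d c h)
    (hc : ∀ i < m, (e + d) * D + c ≠ 2 * e * i * (n + 1)) : branch n e ^ m ∣ h := by
  induction m generalizing c D h with
  | zero => simp
  | succ m ih =>
    rcases eq_or_ne h 0 with rfl | h0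
    · simp
    obtain ⟨g, rfl⟩ : branch n e ∣ h := branch_dvd_of_dvd_shiftedDeriv he hh
      (dvd_trans (dvd_pow_self _ m.succ_ne_zero) hdvd) (by simpa using hc 0 m.succ_pos)
    obtain ⟨D', rfl, hg⟩ := isWeightedHomogeneous_branch.exists_add_of_mul hh h0
    rw [shiftedDeriv_mul (gradDot_branch he), pow_succ', mul_dvd_mul_iff_left branch_ne_zero]
      at hdvd
    rw [pow_succ']
    refine mul_dvd_mul_left _ (ih hg hdvd fun i hi hi' => hc (i + 1) (by omega) ?_)
    push_cast
    linear_combination hi'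

theorem branch_pow_dvd_of_dvd_gradDot (he : e * e = 1) {a N D : ℕ}
    (hea : (e + d) * N = 2 * e * a) (ha : a ≤ N) (hD : (n + 1) * N ≤ D)
    {q : MvPolynomial (Fin 2) ℝ} (hq : q.IsWeightedHomogeneous ![1, n + 1] D)
    (hdvd : branch n e ^ a ∣ gradDot q (fieldP n d) (fieldQ n d)) : branch n e ^ a ∣ q := by
  refine branch_pow_dvd_of_dvd_shiftedDeriv he a (c := 0) hq (by simpa [shiftedDeriv] using hdvd)
    fun i hi hi' => ?_
  have hDr : ((n : ℝ) + 1) * N ≤ D := by exact_mod_cast hD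
  have hia : (i : ℝ) + 1 ≤ a := by exact_mod_cast hi
  have haN : (a : ℝ) ≤ N := by exact_mod_cast ha
  have haD : (a : ℝ) * D = i * ((n + 1) * N) := by
    linear_combination e * (N : ℝ) / 2 * hi' - e * (D : ℝ) / 2 * hea
      - ((a : ℝ) * D - i * ((n + 1) * N)) * he
  nlinarith

end

noncomputable def firstIntegral (n m₁ m₂ : ℕ) : MvPolynomial (Fin 2) ℝ :=
  branch n 1 ^ m₁ * branch n (-1) ^ m₂

section

variable {n m₁ m₂ : ℕ} {d : ℝ}

theorem isWeightedHomogeneous_firstIntegral :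
    (firstIntegral n m₁ m₂).IsWeightedHomogeneous ![1, n + 1] ((n + 1) * (m₁ + m₂)) := by
  have h := ((isWeightedHomogeneous_branch (n := n) (e := 1)).pow m₁).mul
    ((isWeightedHomogeneous_branch (n := n) (e := -1)).pow m₂)
  rwa [smul_eq_mul, smul_eq_mul, ← add_mul, mul_comm (m₁ + m₂)] at h

theorem firstIntegral_ne_zero : firstIntegral n m₁ m₂ ≠ 0 :=
  mul_ne_zero (pow_ne_zero _ branch_ne_zero) (pow_ne_zero _ branch_ne_zero)

theorem gradDot_firstIntegral_mul (hd : d * (m₁ + m₂) = m₁ - m₂)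
    (h : MvPolynomial (Fin 2) ℝ) :
    gradDot (firstIntegral n m₁ m₂ * h) (fieldP n d) (fieldQ n d) =
      firstIntegral n m₁ m₂ * gradDot h (fieldP n d) (fieldQ n d) := by
  have hgrad : ∀ g, gradDot g (fieldP n d) (fieldQ n d) = shiftedDeriv n d 0 g := by
    simp [shiftedDeriv]
  have hκ : (0 : ℝ) + m₁ * ((n + 1) * (d - 1)) + m₂ * ((n + 1) * (d - -1)) = 0 := by
    linear_combination ((n : ℝ) + 1) * hd
  rw [hgrad, hgrad, firstIntegral, mul_assoc, shiftedDeriv_pow_mul (gradDot_branch (by norm_num)),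
    shiftedDeriv_pow_mul (gradDot_branch (by norm_num)), hκ, mul_assoc]

theorem firstIntegral_dvd_of_gradDot_eq (hd : d * (m₁ + m₂) = m₁ - m₂) {D : ℕ}
    (hD : (n + 1) * (m₁ + m₂) ≤ D) {p q : MvPolynomial (Fin 2) ℝ}
    (hq : q.IsWeightedHomogeneous ![1, n + 1] D)
    (hgrad : gradDot q (fieldP n d) (fieldQ n d) = p * firstIntegral n m₁ m₂) :
    firstIntegral n m₁ m₂ ∣ q := by
  have h₁ : branch n 1 ^ m₁ ∣ q := branch_pow_dvd_of_dvd_gradDot (by norm_num)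
    (by push_cast; linear_combination hd) (by omega) hD hq
    (hgrad ▸ dvd_mul_of_dvd_right (dvd_mul_right _ _) p)
  have h₂ : branch n (-1) ^ m₂ ∣ q := branch_pow_dvd_of_dvd_gradDot (by norm_num)
    (by push_cast; linear_combination hd) (by omega) hD hq
    (hgrad ▸ dvd_mul_of_dvd_right (dvd_mul_left _ _) p)
  obtain ⟨g, rfl⟩ := h₁
  have hnd : ¬ branch n (-1) ∣ branch n 1 ^ m₁ := fun h =>
    not_branch_dvd_branch (by norm_num) (prime_branch.dvd_of_dvd_pow h)
  exact mul_dvd_mul_left _ (prime_branch.pow_dvd_of_dvd_mul_left _ hnd h₂)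

end

theorem corange_cyclicity_general
    (n m₁ m₂ : ℕ) (hm₁ : 0 < m₁)
    (k : ℕ) (hk : n ≤ k)
    (p : MvPolynomial (Fin 2) ℝ) :
    (∃ q : MvPolynomial (Fin 2) ℝ, IsQH 1 (n + 1) (k + (n + 1) * (m₁ + m₂) - n) q ∧
      gradDot q
        (X 1 + C (((m₁ : ℝ) - (m₂ : ℝ)) / ((m₁ : ℝ) + (m₂ : ℝ))) * X 0 ^ (n + 1))
        (C ((n : ℝ) + 1) * X 0 ^ (2 * n + 1)
          + C (((n : ℝ) + 1) * (((m₁ : ℝ) - (m₂ : ℝ)) / ((m₁ : ℝ) + (m₂ : ℝ))))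
            * X 0 ^ n * X 1)
      = p * ((X 1 - X 0 ^ (n + 1)) ^ m₁ * (X 1 + X 0 ^ (n + 1)) ^ m₂)) ↔
    (∃ q' : MvPolynomial (Fin 2) ℝ, IsQH 1 (n + 1) (k - n) q' ∧
      gradDot q'
        (X 1 + C (((m₁ : ℝ) - (m₂ : ℝ)) / ((m₁ : ℝ) + (m₂ : ℝ))) * X 0 ^ (n + 1))
        (C ((n : ℝ) + 1) * X 0 ^ (2 * n + 1)
          + C (((n : ℝ) + 1) * (((m₁ : ℝ) - (m₂ : ℝ)) / ((m₁ : ℝ) + (m₂ : ℝ))))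
            * X 0 ^ n * X 1)
      = p) := by
  set d : ℝ := ((m₁ : ℝ) - m₂) / ((m₁ : ℝ) + m₂)
  have hd : d * (m₁ + m₂) = m₁ - m₂ := div_mul_cancel₀ _ (by positivity)
  have hI : (X 1 - X 0 ^ (n + 1)) ^ m₁ * (X 1 + X 0 ^ (n + 1)) ^ m₂ =
      firstIntegral n m₁ m₂ := by
    simp [firstIntegral, branch, sub_eq_add_neg]
  have hdeg : k + (n + 1) * (m₁ + m₂) - n = (n + 1) * (m₁ + m₂) + (k - n) := by omega
  change (∃ q, _ ∧ gradDot q (fieldP n d) (fieldQ n d) = _) ↔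
    ∃ q', _ ∧ gradDot q' (fieldP n d) (fieldQ n d) = p
  simp only [hI, hdeg, isQH_iff_isWeightedHomogeneous]
  constructor
  · rintro ⟨q, hq, hgrad⟩
    obtain ⟨q', rfl⟩ := firstIntegral_dvd_of_gradDot_eq hd (Nat.le_add_right _ _) hq hgrad
    refine ⟨q', isWeightedHomogeneous_firstIntegral.of_mul_left firstIntegral_ne_zero hq,
      mul_left_cancel₀ (firstIntegral_ne_zero (n := n) (m₁ := m₁) (m₂ := m₂)) ?_⟩
    rw [← gradDot_firstIntegral_mul hd, hgrad, mul_comm]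
  · rintro ⟨q', hq', hgrad⟩
    refine ⟨firstIntegral n m₁ m₂ * q', isWeightedHomogeneous_firstIntegral.mul hq', ?_⟩
    rw [gradDot_firstIntegral_mul hd, hgrad, mul_comm]

/-- Cyclicity of the co-ranges: `p·I_M` lies in the range of `ℓ_{k+M}` if and
only if `p` lies in the range of `ℓ_k`. -/
theorem corange_cyclicity
    (n m₁ m₂ : ℕ) (hn : 1 ≤ n) (hm₁ : 0 < m₁) (hm₂ : 0 < m₂)
    (hcop : Nat.Coprime m₁ m₂) (hne : m₁ ≠ m₂)
    (k : ℕ) (hk : n ≤ k)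
    (p : MvPolynomial (Fin 2) ℝ) (hp : IsQH 1 (n + 1) k p) :
    (∃ q : MvPolynomial (Fin 2) ℝ, IsQH 1 (n + 1) (k + (n + 1) * (m₁ + m₂) - n) q ∧
      gradDot q
        (X 1 + C (((m₁ : ℝ) - (m₂ : ℝ)) / ((m₁ : ℝ) + (m₂ : ℝ))) * X 0 ^ (n + 1))
        (C ((n : ℝ) + 1) * X 0 ^ (2 * n + 1)
          + C (((n : ℝ) + 1) * (((m₁ : ℝ) - (m₂ : ℝ)) / ((m₁ : ℝ) + (m₂ : ℝ))))
            * X 0 ^ n * X 1)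
      = p * ((X 1 - X 0 ^ (n + 1)) ^ m₁ * (X 1 + X 0 ^ (n + 1)) ^ m₂)) ↔
    (∃ q' : MvPolynomial (Fin 2) ℝ, IsQH 1 (n + 1) (k - n) q' ∧
      gradDot q'
        (X 1 + C (((m₁ : ℝ) - (m₂ : ℝ)) / ((m₁ : ℝ) + (m₂ : ℝ))) * X 0 ^ (n + 1))
        (C ((n : ℝ) + 1) * X 0 ^ (2 * n + 1)
          + C (((n : ℝ) + 1) * (((m₁ : ℝ) - (m₂ : ℝ)) / ((m₁ : ℝ) + (m₂ : ℝ))))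
            * X 0 ^ n * X 1)
      = p) :=
  corange_cyclicity_general n m₁ m₂ hm₁ k hk p
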